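/- arXiv:2501.14611 — 7 statements merged into one kernel-verified Lean document; each statement's English description precedes it below -/
import Mathlib

section
/- For every point P in ℝ², every point Q in ℝ², every ε > 0, there exists τ > 0 such that for all t > τ, there exists a point w on the circle of radius t centered at P whose image under the quotient map ℝ² → ℝ²/ℤ² lies within distance ε of the image of Q. (Wave fronts on the flat torus become dense.) -/
/-- Euclidean distance on `ℝ × ℝ`. -/
noncomputable def eDist (a b : ℝ × ℝ) : ℝ :=
  Real.sqrt ((a.1 - b.1) ^ 2 + (a.2 - b.2) ^ 2)

set_option maxHeartbeats 1000000 in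
/-- Wave fronts on the flat torus `ℝ²/ℤ²` become dense: for every center `P`,
target `Q` and `ε > 0`, there is `τ > 0` such that for all `t > τ` the circle
of radius `t` around `P` has a point whose image in the torus is within `ε`
of the image of `Q` (i.e. some integer translate is within `ε` of `Q`). -/
theorem torus_waveFront_dense :
    ∀ P Q : ℝ × ℝ, ∀ ε : ℝ, ε > 0 → ∃ τ : ℝ, τ > 0 ∧ ∀ t : ℝ, t > τ →
      ∃ w : ℝ × ℝ, eDist w P = t ∧
        ∃ m n : ℤ, eDist (w.1 + (m : ℝ), w.2 + (n : ℝ)) Q < ε := by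
  classical
  intro P Q ε hε
  refine ⟨max 9 (16 / ε ^ 2), lt_of_lt_of_le (by norm_num) (le_max_left _ _), ?_⟩
  intro t ht
  have ht9 : (9:ℝ) < t := lt_of_le_of_lt (le_max_left _ _) ht
  have htE : 16 / ε ^ 2 < t := lt_of_le_of_lt (le_max_right _ _) ht
  have ht0 : (0:ℝ) < t := by linarith
  have htE2 : (16:ℝ) < t * ε ^ 2 := by
    rw [div_lt_iff₀ (by positivity)] at htE; linarith
  set a : ℝ := Q.1 - P.1 with ha
  set b : ℝ := Q.2 - P.2 with hb
  set N : ℤ := ⌈b - t + 1⌉ with hN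
  set c : ℝ := b - N with hc
  have hc1 : c ≤ t - 1 := by
    have h := Int.le_ceil (b - t + 1)
    simp only [hc]; linarith
  have hc2 : t - 2 < c := by
    have h := Int.ceil_lt_add_one (b - t + 1)
    simp only [hc]; linarith
  have hcpos : 0 < c := by linarith
  set s0 : ℝ := a - ⌈a⌉ with hs0
  have hs0le : s0 ≤ 0 := by
    have := Int.le_ceil a; simp only [hs0]; linarith
  have hs0gt : -1 < s0 := by
    have := Int.ceil_lt_add_one a; simp only [hs0]; linarith
  -- the family of norms
  set f : ℕ → ℝ := fun k => Real.sqrt ((s0 + k) ^ 2 + c ^ 2) with hf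
  have hfnonneg : ∀ k, 0 ≤ f k := fun k => Real.sqrt_nonneg _
  have hfsq : ∀ k : ℕ, (f k) ^ 2 = (s0 + k) ^ 2 + c ^ 2 := by
    intro k; exact Real.sq_sqrt (by positivity)
  have hfge : ∀ k : ℕ, s0 + k ≤ f k := by
    intro k
    rcases le_or_gt (s0 + k) 0 with h | h
    · exact le_trans h (hfnonneg k)
    · have : (s0 + (k:ℝ)) ^ 2 ≤ (s0 + k) ^ 2 + c ^ 2 := by nlinarith
      calc s0 + (k:ℝ) = Real.sqrt ((s0 + k) ^ 2) := (Real.sqrt_sq h.le).symm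
        _ ≤ f k := Real.sqrt_le_sqrt (by nlinarith)
  have hex : ∃ k : ℕ, t < f k := by
    refine ⟨⌈t⌉.toNat + 2, ?_⟩
    have h1 : (t:ℝ) ≤ ((⌈t⌉.toNat : ℕ) : ℝ) := by
      have h0 : ((⌈t⌉ : ℤ) : ℝ) ≤ ((⌈t⌉.toNat : ℕ) : ℝ) := by
        exact_mod_cast Int.self_le_toNat _
      linarith [Int.le_ceil t]
    have h2 := hfge (⌈t⌉.toNat + 2)
    push_cast at h2 ⊢
    nlinarith
  set K : ℕ := Nat.find hex with hK
  have hKgt : t < f K := Nat.find_spec hex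
  have hf0 : f 0 < t := by
    have hlt : s0 ^ 2 + c ^ 2 < t ^ 2 := by nlinarith
    have : f 0 = Real.sqrt (s0 ^ 2 + c ^ 2) := by simp [hf]
    rw [this]
    rw [show t = Real.sqrt (t ^ 2) from (Real.sqrt_sq ht0.le).symm]
    exact Real.sqrt_lt_sqrt (by positivity) hlt
  have hK1 : 1 ≤ K := by
    rcases Nat.eq_zero_or_pos K with h | h
    · exfalso; rw [h] at hKgt; linarith
    · exact h
  have hKprev : f (K - 1) ≤ t := by
    have := Nat.find_min hex (show K - 1 < K from Nat.sub_lt hK1 one_pos)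
    linarith [not_lt.mp this]
  clear_value K
  set u1 : ℝ := s0 + ((K : ℝ) - 1) with hu1
  set u2 : ℝ := s0 + (K : ℝ) with hu2
  have hcastK : ((K - 1 : ℕ) : ℝ) = (K : ℝ) - 1 := by
    push_cast [Nat.cast_sub hK1]; ring
  have hu1sq : u1 ^ 2 + c ^ 2 ≤ t ^ 2 := by
    have h := hKprev
    have hsq : (f (K-1)) ^ 2 = u1 ^ 2 + c ^ 2 := by rw [hfsq, hcastK]
    nlinarith [hfnonneg (K-1)]
  set r : ℝ := f K with hr
  have hr2 : r ^ 2 = u2 ^ 2 + c ^ 2 := hfsq K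
  have hrt : t < r := hKgt
  clear_value r
  clear hr hfsq hfnonneg hfge hf0 hKgt hKprev hf hK hex f
  clear_value N c s0 u1 u2
  clear ht
  have hu1bd : u1 ^ 2 ≤ 4 * t - 4 := by nlinarith
  have hrpos : 0 < r := lt_trans ht0 hrt
  have hr0 : r ≠ 0 := ne_of_gt hrpos
  -- r < t + ε
  have htE3 : 12 < t * ε := by nlinarith [sq_nonneg (t * ε - 12)]
  have hu1lt : 2 * u1 < t * ε := by
    rcases le_or_gt u1 0 with h | h
    · nlinarith
    · nlinarith
  have hrlt : r < t + ε := by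
    have hsq : r ^ 2 < (t + ε) ^ 2 := by
      have : u2 = u1 + 1 := by rw [hu1, hu2]; ring
      nlinarith
    exact lt_of_pow_lt_pow_left₀ 2 (by positivity) hsq
  -- the wave point
  refine ⟨(P.1 + t / r * u2, P.2 + t / r * c), ?_, ⌈a⌉ - (K : ℤ), N, ?_⟩
  · unfold eDist
    have h1 : (P.1 + t / r * u2 - P.1) ^ 2 + (P.2 + t / r * c - P.2) ^ 2 = t ^ 2 := by
      field_simp
      linear_combination (-(t ^ 2)) * hr2
    simp only
    rw [h1, Real.sqrt_sq ht0.le]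
  · unfold eDist
    have hx : P.1 + t / r * u2 + ((⌈a⌉ - (K:ℤ) : ℤ) : ℝ) - Q.1 = (t / r - 1) * u2 := by
      have h2 : u2 = a - (⌈a⌉ : ℝ) + (K : ℝ) := by rw [hu2, hs0]
      rw [h2, ha]; push_cast; ring
    have hy : P.2 + t / r * c + ((N : ℤ) : ℝ) - Q.2 = (t / r - 1) * c := by
      rw [hc, hb]; push_cast; ring
    simp only [hx, hy]
    have h2 : ((t / r - 1) * u2) ^ 2 + ((t / r - 1) * c) ^ 2 = (r - t) ^ 2 := by
      field_simp
      linear_combination (-((t - r) ^ 2)) * hr2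
    rw [h2, Real.sqrt_sq (by linarith)]
    linarith
end

section
/- On the flat Klein bottle, all wave fronts become dense: for every P ∈ ℝ², every Q ∈ ℝ², and every ε > 0, there is τ such that for all t > τ the image of the circle of radius t centered at P under the quotient map ℝ² → K meets the ε-ball around the image of Q, where K = ℝ²/Γ and Γ is the Klein bottle group generated by (x,y) ↦ (x+1, −y) and (x,y) ↦ (x, y+1). -/
/-- Discrete crossing lemma: if a sequence starts above `s` and is below `s`
at time `M+1`, then at some index it crosses `s`. -/
lemma klein_crossing (f : ℕ → ℝ) (s : ℝ) :
    ∀ M : ℕ, s ≤ f 0 → f (M + 1) ≤ s → ∃ i ≤ M, s ≤ f i ∧ f (i + 1) ≤ s := by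
  intro M
  induction M with
  | zero => intro h0 h1; exact ⟨0, le_refl 0, h0, h1⟩
  | succ M ih =>
    intro h0 h1
    by_cases h : f (M + 1) ≤ s
    · obtain ⟨i, hi, hh⟩ := ih h0 h
      exact ⟨i, hi.trans (Nat.le_succ M), hh⟩
    · exact ⟨M + 1, le_refl _, le_of_not_ge h, h1⟩

set_option maxHeartbeats 1000000 in
/-- Wave fronts on the flat Klein bottle `K = ℝ²/Γ` become dense, where `Γ`
is generated by `(x,y) ↦ (x+1, −y)` and `(x,y) ↦ (x, y+1)`; a general element
of `Γ` sends `(x,y)` to `(x + m, (−1)^m y + n)`. -/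
theorem klein_waveFront_dense :
    ∀ P Q : ℝ × ℝ, ∀ ε : ℝ, ε > 0 → ∃ τ : ℝ, ∀ t : ℝ, t > τ →
      ∃ w : ℝ × ℝ, eDist w P = t ∧
        ∃ m n : ℤ, eDist (w.1 + (m : ℝ), (-1 : ℝ) ^ m * w.2 + (n : ℝ)) Q < ε := by
  intro P Q ε hε
  refine ⟨max 25 (400 / ε ^ 2), ?_⟩
  intro t ht
  have ht25 : (25:ℝ) ≤ t := le_of_lt (lt_of_le_of_lt (le_max_left _ _) ht)
  have ht0 : (0:ℝ) < t := by linarith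
  have hsq : Real.sqrt t * Real.sqrt t = t := Real.mul_self_sqrt ht0.le
  have hst : (5:ℝ) ≤ Real.sqrt t := by
    have : Real.sqrt 25 ≤ Real.sqrt t := Real.sqrt_le_sqrt ht25
    have h25 : Real.sqrt 25 = 5 := by
      rw [show (25:ℝ) = 5 ^ 2 by norm_num, Real.sqrt_sq]; norm_num
    linarith [h25 ▸ this]
  have hstpos : (0:ℝ) < Real.sqrt t := by linarith
  -- step size bound
  have hεs : 20 / Real.sqrt t < ε := by
    have h1 : 400 / ε ^ 2 < t := lt_of_le_of_lt (le_max_right _ _) ht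
    have h2 : 20 / ε < Real.sqrt t := by
      rw [Real.lt_sqrt (by positivity)]
      calc (20 / ε) ^ 2 = 400 / ε ^ 2 := by ring
        _ < t := h1
    rw [div_lt_iff₀ hstpos]
    have hεpos : (0:ℝ) < 20 / ε := by positivity
    calc (20:ℝ) = (20 / ε) * ε := by field_simp
      _ < Real.sqrt t * ε := by nlinarith
      _ = ε * Real.sqrt t := by ring
  set N : ℕ := ⌈Real.sqrt t⌉₊ with hNdef
  have hN1 : Real.sqrt t ≤ (N : ℝ) := Nat.le_ceil _
  have hN2 : (N : ℝ) ≤ Real.sqrt t + 1 := le_of_lt (Nat.ceil_lt_add_one hstpos.le)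
  set k₀ : ℤ := ⌈(P.1 - Q.1) / 2⌉ with hk₀
  set c0 : ℝ := Q.1 + 2 * (k₀ : ℝ) - P.1 with hc0def
  have hc0 : 0 ≤ c0 := by
    have := Int.le_ceil ((P.1 - Q.1) / 2)
    rw [hc0def]; linarith
  have hc0' : c0 < 2 := by
    have := Int.ceil_lt_add_one ((P.1 - Q.1) / 2)
    rw [hc0def]; linarith
  set c : ℕ → ℝ := fun k => c0 + 2 * (k : ℝ) with hcdef
  set f : ℕ → ℝ := fun k => Real.sqrt (t ^ 2 - (c k) ^ 2) with hfdef
  -- bounds on c k for k ≤ N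
  have hck : ∀ k : ℕ, k ≤ N → 0 ≤ c k ∧ (c k) ^ 2 ≤ 8 * t := by
    intro k hk
    have hk' : (k : ℝ) ≤ (N : ℝ) := by exact_mod_cast hk
    have h1 : 0 ≤ c k := by simp only [hcdef]; positivity
    have h2 : c k ≤ 2 * Real.sqrt t + 4 := by
      simp only [hcdef]; nlinarith
    refine ⟨h1, ?_⟩
    nlinarith [hsq, hst]
  have hfsq : ∀ k : ℕ, k ≤ N → (f k) ^ 2 = t ^ 2 - (c k) ^ 2 := by
    intro k hk
    obtain ⟨h1, h2⟩ := hck k hk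
    apply Real.sq_sqrt
    nlinarith
  have hf : ∀ k : ℕ, k ≤ N → t / 2 ≤ f k ∧ f k ≤ t := by
    intro k hk
    obtain ⟨h1, h2⟩ := hck k hk
    constructor
    · have htt : 25 * t ≤ t ^ 2 := by nlinarith
      have hnn : (t / 2) ^ 2 ≤ t ^ 2 - c k ^ 2 := by
        have h2' : c k ^ 2 ≤ 8 * t := h2
        generalize c k = x at h2' ⊢
        nlinarith [htt, h2']
      calc t / 2 = Real.sqrt ((t / 2) ^ 2) := (Real.sqrt_sq (by linarith)).symm
        _ ≤ Real.sqrt (t ^ 2 - c k ^ 2) := Real.sqrt_le_sqrt hnn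
        _ = f k := rfl
    · calc f k = Real.sqrt (t ^ 2 - c k ^ 2) := rfl
        _ ≤ Real.sqrt (t ^ 2) := Real.sqrt_le_sqrt (by nlinarith)
        _ = t := Real.sqrt_sq ht0.le
  -- step bound
  have hstep : ∀ k : ℕ, k + 1 ≤ N → f (k + 1) ≤ f k ∧ f k - f (k + 1) ≤ 20 / Real.sqrt t := by
    intro k hk
    have hkN : k ≤ N := Nat.le_of_succ_le hk
    obtain ⟨hc1, hc2⟩ := hck k hkN
    obtain ⟨hf1, hf2⟩ := hf k hkN
    obtain ⟨hg1, hg2⟩ := hf (k + 1) hk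
    have hcs : c (k + 1) = c k + 2 := by simp only [hcdef]; push_cast; ring
    have hmono : f (k + 1) ≤ f k := by
      apply Real.sqrt_le_sqrt
      rw [hcs]; nlinarith
    refine ⟨hmono, ?_⟩
    have hdiff : (f k - f (k + 1)) * (f k + f (k + 1)) = 4 * c k + 4 := by
      have e1 := hfsq k hkN
      have e2 := hfsq (k + 1) hk
      rw [hcs] at e2
      nlinarith [e1, e2]
    -- c k ≤ 2√t + 4, so RHS ≤ 8√t + 20 ≤ 20√t
    have hckb : c k ≤ 2 * Real.sqrt t + 4 := by
      have hk' : (k : ℝ) ≤ (N : ℝ) := by exact_mod_cast hkN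
      simp only [hcdef]; nlinarith
    have hd0 : 0 ≤ f k - f (k + 1) := by linarith
    have hSt : t ≤ f k + f (k + 1) := by linarith
    have hdt : (f k - f (k + 1)) * t ≤ 20 * Real.sqrt t := by
      nlinarith
    rw [le_div_iff₀ hstpos]
    nlinarith [hdt, hsq, hstpos]
  -- descent bound
  have hNpos : 1 ≤ N := by
    by_contra h
    push_neg at h
    interval_cases N
    · simp at hN1; linarith
  have hdesc : f 0 - f N ≥ 2 := by
    obtain ⟨hf01, hf02⟩ := hf 0 (Nat.zero_le N)
    obtain ⟨hfN1, hfN2⟩ := hf N (le_refl N)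
    have e1 := hfsq 0 (Nat.zero_le N)
    have e2 := hfsq N (le_refl N)
    have hcN : c N = c0 + 2 * (N : ℝ) := rfl
    have hc00 : c 0 = c0 := by simp [hcdef]
    have hNt : t ≤ (N : ℝ) * (N : ℝ) := by nlinarith [hN1, hsq, hstpos]
    have hdiff : (f 0 - f N) * (f 0 + f N) = 4 * (N : ℝ) * c0 + 4 * (N : ℝ) ^ 2 := by
      rw [hc00] at e1; rw [hcN] at e2; nlinarith [e1, e2]
    have hNr : (0:ℝ) ≤ (N : ℝ) := Nat.cast_nonneg N
    nlinarith [hdiff, hc0, hNt, hf02, hfN2, hf01, hfN1]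
  -- target value
  set nz : ℤ := ⌈f N - (Q.2 - P.2)⌉ with hnz
  set s : ℝ := Q.2 - P.2 + (nz : ℝ) with hsdef
  have hs1 : f N ≤ s := by
    have := Int.le_ceil (f N - (Q.2 - P.2))
    rw [hsdef]; linarith
  have hs2 : s ≤ f 0 := by
    have := Int.ceil_lt_add_one (f N - (Q.2 - P.2))
    rw [hsdef]; linarith
  -- crossing
  obtain ⟨M, hM⟩ : ∃ M, N = M + 1 := ⟨N - 1, (Nat.succ_pred_eq_of_pos hNpos).symm⟩
  obtain ⟨i, hiM, his, hi1s⟩ := klein_crossing f s M hs2 (by rw [← hM]; exact hs1)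
  have hi1 : i + 1 ≤ N := by omega
  have hiN : i ≤ N := by omega
  obtain ⟨hstep1, hstep2⟩ := hstep i hi1
  -- conclusion
  refine ⟨(Q.1 + 2 * ((k₀ : ℝ) + (i : ℝ)), P.2 + f i), ?_, -(2 * (k₀ + (i : ℤ))), -nz, ?_⟩
  · have hci : (Q.1 + 2 * ((k₀ : ℝ) + (i : ℝ))) - P.1 = c i := by
      simp only [hcdef, hc0def]; ring
    have : eDist (Q.1 + 2 * ((k₀ : ℝ) + (i : ℝ)), P.2 + f i) P
        = Real.sqrt ((c i) ^ 2 + (f i) ^ 2) := by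
      simp only [eDist]
      rw [hci]
      ring_nf
    rw [this, hfsq i hiN, show (c i) ^ 2 + (t ^ 2 - (c i) ^ 2) = t ^ 2 by ring,
      Real.sqrt_sq ht0.le]
  · have hm : ((-(2 * (k₀ + (i : ℤ)))) : ℤ) = 2 * (-(k₀ + (i : ℤ))) := by ring
    have hpow : (-1 : ℝ) ^ (-(2 * (k₀ + (i : ℤ)))) = 1 := by
      rw [hm, zpow_mul]
      norm_num
    rw [hpow]
    have hx : (Q.1 + 2 * ((k₀ : ℝ) + (i : ℝ))) + ((-(2 * (k₀ + (i : ℤ)))) : ℤ) = Q.1 := by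
      push_cast; ring
    have hy : (1 : ℝ) * (P.2 + f i) + ((-nz : ℤ) : ℝ) - Q.2 = f i - s := by
      rw [hsdef]; push_cast; ring
    simp only [eDist]
    rw [show ((Q.1 + 2 * ((k₀ : ℝ) + (i : ℝ))) + ((-(2 * (k₀ + (i : ℤ)))) : ℤ) - Q.1) = 0 by
      rw [hx]; ring]
    rw [hy]
    rw [show (0:ℝ) ^ 2 + (f i - s) ^ 2 = (f i - s) ^ 2 by ring, Real.sqrt_sq_eq_abs]
    rw [abs_of_nonneg (by linarith)]
    calc f i - s ≤ f i - f (i + 1) := by linarith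
      _ ≤ 20 / Real.sqrt t := hstep2
      _ < ε := hεs
end

section
/- For the billiard in the unit square [0,1]², the wave front of every point P becomes dense: for all P ∈ [0,1]², all Q ∈ [0,1]², and all ε > 0, there is τ such that for every t > τ the set π({x ∈ ℝ² : |x − P| = t}) intersects the ball B(Q, ε) ∩ [0,1]², where π(x,y) = (q(x), q(y)) and q is the 2-periodic tent map. -/
set_option maxHeartbeats 1000000

/-- The 2-periodic tent map `q(x) = 1 − |(x mod 2) − 1|`. -/
noncomputable def tentq (x : ℝ) : ℝ := 1 - |2 * Int.fract (x / 2) - 1|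

lemma tentq_periodic : Function.Periodic tentq 2 := by
  intro x
  unfold tentq
  have : (x + 2) / 2 = x / 2 + 1 := by ring
  rw [this, Int.fract_add_one]

lemma tentq_neg (x : ℝ) : tentq (-x) = tentq x := by
  unfold tentq
  have hne : -x / 2 = -(x / 2) := by ring
  by_cases h : Int.fract (x / 2) = 0
  · have h2 : Int.fract (-(x / 2)) = 0 := by
      rw [Int.fract_neg_eq_zero]; exact h
    rw [hne, h2, h]
  · rw [hne, Int.fract_neg h]
    congr 1
    rw [abs_sub_comm]
    ring_nf

lemma tentq_of_Icc {y : ℝ} (hy : y ∈ Set.Icc (0:ℝ) 1) : tentq y = y := by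
  unfold tentq
  have h : Int.fract (y / 2) = y / 2 :=
    Int.fract_eq_self.2 ⟨by linarith [hy.1], by linarith [hy.2]⟩
  rw [h]
  have : |2 * (y/2) - 1| = 1 - y := by
    rw [abs_of_nonpos (by linarith [hy.2])]; ring
  rw [this]; ring

lemma tentq_int (x : ℝ) (m : ℤ) : tentq (x + 2 * m) = tentq x := by
  have := (tentq_periodic.int_mul m) x
  have h : x + 2 * (m:ℝ) = x + (m:ℝ) * 2 := by ring
  rw [h]
  exact this

lemma tentq_exists_int (x : ℝ) : ∃ m : ℤ, tentq x = |x - 2*m| := by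
  set n : ℤ := ⌊x/2⌋ with hn
  have hu : Int.fract (x/2) = x/2 - n := rfl
  have h0 : 0 ≤ Int.fract (x/2) := Int.fract_nonneg _
  have h1 : Int.fract (x/2) < 1 := Int.fract_lt_one _
  by_cases hc : Int.fract (x/2) ≤ 1/2
  · refine ⟨n, ?_⟩
    unfold tentq
    rw [abs_of_nonpos (by linarith), abs_of_nonneg (by nlinarith [hu])]
    rw [hu]; ring
  · refine ⟨n + 1, ?_⟩
    unfold tentq
    push_neg at hc
    rw [abs_of_nonneg (by linarith), abs_of_nonpos (by push_cast; nlinarith [hu])]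
    rw [hu]
    push_cast
    nlinarith [hu]

lemma tentq_le (x : ℝ) (m : ℤ) : tentq x ≤ |x - 2*m| := by
  set n : ℤ := ⌊x/2⌋ with hn
  have hu : Int.fract (x/2) = x/2 - n := rfl
  have h0 : 0 ≤ Int.fract (x/2) := Int.fract_nonneg _
  have h1 : Int.fract (x/2) < 1 := Int.fract_lt_one _
  set u : ℝ := Int.fract (x/2) with hudef
  have hx : x = 2*n + 2*u := by linarith [hu]
  have habs1 : 1 - 2*u ≤ |2*u - 1| := by
    rw [abs_sub_comm]; exact le_abs_self _
  have habs2 : 2*u - 1 ≤ |2*u - 1| := le_abs_self _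
  rcases le_or_gt m n with hm | hm
  · have hk : (m:ℝ) ≤ n := by exact_mod_cast hm
    have : x - 2*m = 2*((n:ℝ) - m) + 2*u := by rw [hx]; ring
    rw [this, abs_of_nonneg (by nlinarith)]
    unfold tentq
    rw [← hudef]
    nlinarith
  · have hk : (n:ℝ) + 1 ≤ m := by exact_mod_cast hm
    have : x - 2*m = 2*((n:ℝ) - m) + 2*u := by rw [hx]; ring
    rw [this, abs_of_nonpos (by nlinarith)]
    unfold tentq
    rw [← hudef]
    nlinarith

lemma tentq_lipschitz (x y : ℝ) : |tentq x - tentq y| ≤ |x - y| := by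
  rw [abs_sub_le_iff]
  constructor
  · obtain ⟨m, hm⟩ := tentq_exists_int y
    have h1 := tentq_le x m
    have h2 : |x - 2*m| ≤ |x - y| + |y - 2*m| := by
      have := abs_sub_le x y (2*(m:ℝ))
      linarith
    have h3 := tentq_le x m
    linarith
  · obtain ⟨m, hm⟩ := tentq_exists_int x
    have h1 := tentq_le y m
    have h2 : |y - 2*m| ≤ |x - y| + |x - 2*m| := by
      have := abs_sub_le y x (2*(m:ℝ))
      rw [abs_sub_comm (y:ℝ) x] at this
      linarith
    linarith [hm]

lemma tentq_surjOn (y c : ℝ) (hy : y ∈ Set.Icc (0:ℝ) 1) :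
    ∃ x ∈ Set.Icc c (c+2), tentq x = y := by
  set m : ℤ := ⌈c/2⌉ with hm
  have h1 : c ≤ 2*(m:ℝ) := by
    have := Int.le_ceil (c/2); rw [← hm] at this; linarith
  have h2 : (2:ℝ)*m ≤ c + 2 := by
    have := Int.ceil_lt_add_one (c/2); rw [← hm] at this; linarith
  have hty : tentq y = y := tentq_of_Icc hy
  by_cases hc : 2*(m:ℝ) + y ≤ c + 2
  · refine ⟨2*m + y, ⟨by linarith [hy.1], hc⟩, ?_⟩
    have : 2*(m:ℝ) + y = y + 2*m := by ring
    rw [this, tentq_int, hty]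
  · push_neg at hc
    refine ⟨2*m - y, ⟨by nlinarith [hy.2], by linarith [hy.1]⟩, ?_⟩
    have h3 : 2*(m:ℝ) - y = -(y + 2*(-m : ℤ)) := by push_cast; ring
    rw [h3, tentq_neg, tentq_int, hty]

lemma tentq_lipschitzWith : LipschitzWith 1 tentq := by
  apply LipschitzWith.of_dist_le_mul
  intro x y
  rw [Real.dist_eq, Real.dist_eq, NNReal.coe_one, one_mul]
  exact tentq_lipschitz x y

lemma tentq_continuous : Continuous tentq := tentq_lipschitzWith.continuous

/-- For the billiard in the unit square, the wave front of every point
becomes dense: the image of the circle of radius `t` around `P` under the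
folding map `π(x,y) = (q x, q y)` eventually meets every ball in `[0,1]²`. -/
theorem square_billiard_waveFront_dense :
    ∀ P ∈ Set.Icc (0 : ℝ) 1 ×ˢ Set.Icc (0 : ℝ) 1,
    ∀ Q ∈ Set.Icc (0 : ℝ) 1 ×ˢ Set.Icc (0 : ℝ) 1,
    ∀ ε : ℝ, ε > 0 → ∃ τ : ℝ, ∀ t : ℝ, t > τ →
      ∃ w : ℝ × ℝ, eDist w P = t ∧ eDist (tentq w.1, tentq w.2) Q < ε := by
  rintro ⟨p1, p2⟩ _hP ⟨q1, q2⟩ hQ ε hε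
  have hq1 : q1 ∈ Set.Icc (0:ℝ) 1 := hQ.1
  have hq2 : q2 ∈ Set.Icc (0:ℝ) 1 := hQ.2
  set δ : ℝ := min ε 1 / 2 with hδdef
  have hδ0 : 0 < δ := by
    have : 0 < min ε 1 := lt_min hε one_pos
    positivity
  have hδ1 : δ ≤ 1/2 := by
    have : min ε 1 ≤ 1 := min_le_right _ _
    rw [hδdef]; linarith
  have hδε : δ < ε := by
    have : min ε 1 ≤ ε := min_le_left _ _
    rw [hδdef]; linarith
  refine ⟨200/δ^2 + 200, fun t ht => ?_⟩
  have hd2 : 0 < 200/δ^2 := by positivity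
  have ht200 : 200 < t := by linarith
  have ht0 : 0 < t := by linarith
  set r := Real.sqrt t with hr
  have hr2 : r^2 = t := Real.sq_sqrt ht0.le
  have hr0 : 0 ≤ r := Real.sqrt_nonneg t
  have hr14 : 14 ≤ r := by nlinarith
  have hrδ : 14 < r*δ := by
    have h : 200/δ^2 < t := by linarith
    have h2 : 200 < t*δ^2 := by
      rw [div_lt_iff₀ (by positivity)] at h; linarith
    nlinarith [mul_nonneg hr0 hδ0.le]
  obtain ⟨x0, hx0mem, hx0⟩ := tentq_surjOn q1 (p1 + t - 2 - δ) hq1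
  set g : ℝ → ℝ := fun x => p2 + Real.sqrt (t^2 - (x - p1)^2) with hg
  have hgcont : Continuous g := by
    apply Continuous.add continuous_const
    exact Real.continuous_sqrt.comp (by continuity)
  have hA1 : t - 2 - δ ≤ x0 - p1 := by
    have := hx0mem.1; linarith
  have hA2 : x0 - p1 ≤ t - δ := by
    have := hx0mem.2; linarith
  have hnn1 : 0 ≤ t^2 - (x0 - p1)^2 := by nlinarith
  have hnn2 : 0 ≤ t^2 - (x0 + δ - p1)^2 := by nlinarith
  set f0 := Real.sqrt (t^2 - (x0 - p1)^2) with hf0d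
  set f1 := Real.sqrt (t^2 - (x0 + δ - p1)^2) with hf1d
  have hf0 : f0^2 = t^2 - (x0-p1)^2 := Real.sq_sqrt hnn1
  have hf1 : f1^2 = t^2 - (x0+δ-p1)^2 := Real.sq_sqrt hnn2
  have hf0n : 0 ≤ f0 := Real.sqrt_nonneg _
  have hf1n : 0 ≤ f1 := Real.sqrt_nonneg _
  have hrpos : (0:ℝ) < r := by linarith
  have hf1le : f1 ≤ 3*r := by
    have hAd : t - 2 ≤ x0 + δ - p1 := by linarith
    have hsq2 : (t-2)^2 ≤ (x0+δ-p1)^2 := pow_le_pow_left₀ (by linarith) hAd 2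
    have h3r : (3*r)^2 = 9*t := by rw [mul_pow, hr2]; norm_num
    have h9 : t^2 - (x0+δ-p1)^2 ≤ (3*r)^2 := by nlinarith [hsq2, h3r]
    calc f1 ≤ Real.sqrt ((3*r)^2) := Real.sqrt_le_sqrt h9
      _ = 3*r := Real.sqrt_sq (by positivity)
  have h28 : 14*r < δ*t := by
    have h := mul_lt_mul_of_pos_right hrδ hrpos
    have hδt : δ * r^2 = δ * t := by rw [hr2]
    nlinarith [h, hδt]
  have hkey : g (x0+δ) + 2 ≤ g x0 := by
    have hsq : (f1+2)^2 ≤ f0^2 := by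
      nlinarith [hf0, hf1, hf1le, h28, hr14, hδ0.le, hδ1,
        mul_le_mul_of_nonneg_left hA1 hδ0.le]
    have : f1 + 2 ≤ f0 := by nlinarith [hf0n, hf1n, hsq]
    show p2 + Real.sqrt (t^2 - (x0 + δ - p1)^2) + 2 ≤ p2 + Real.sqrt (t^2 - (x0 - p1)^2)
    rw [← hf0d, ← hf1d]; linarith
  have hsub : Set.Icc (g (x0+δ)) (g x0) ⊆ g '' Set.Icc x0 (x0+δ) :=
    intermediate_value_Icc' (by linarith) hgcont.continuousOn
  obtain ⟨z, hzmem, hz⟩ := tentq_surjOn q2 (g (x0+δ)) hq2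
  obtain ⟨x', hx'mem, hgx'⟩ := hsub ⟨hzmem.1, by linarith [hzmem.2]⟩
  refine ⟨(x', g x'), ?_, ?_⟩
  · have hb1 : t - 2 - δ ≤ x' - p1 := by
      have := hx'mem.1; linarith
    have hb2 : x' - p1 ≤ t := by
      have := hx'mem.2; linarith
    have hnn : 0 ≤ t^2 - (x'-p1)^2 := by nlinarith
    show Real.sqrt ((x' - p1)^2 + (g x' - p2)^2) = t
    have h2 : (x'-p1)^2 + (g x' - p2)^2 = t^2 := by
      show (x'-p1)^2 + (p2 + Real.sqrt (t^2 - (x' - p1)^2) - p2)^2 = t^2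
      rw [add_sub_cancel_left, Real.sq_sqrt hnn]; ring
    rw [h2, Real.sqrt_sq ht0.le]
  · have hq2' : tentq (g x') = q2 := by rw [hgx']; exact hz
    show Real.sqrt ((tentq x' - q1)^2 + (tentq (g x') - q2)^2) < ε
    rw [hq2', sub_self]
    have h0 : (0:ℝ)^2 = 0 := by norm_num
    rw [h0, add_zero, Real.sqrt_sq_eq_abs]
    have hlip : |tentq x' - q1| ≤ |x' - x0| := by
      rw [← hx0]; exact tentq_lipschitz x' x0
    have hx'd : |x' - x0| ≤ δ := by
      rw [abs_le]
      exact ⟨by linarith [hx'mem.1], by linarith [hx'mem.2]⟩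
    linarith
end

section
/- For any α, β > 0 and any P ∈ ℝ², the wave front of P becomes dense on the flat torus ℝ/(αℤ) × ℝ/(βℤ): for every Q and every ε > 0 there is τ such that for all t > τ the image of the circle {x : |x−P|=t} in the torus meets the ε-ball around the image of Q. -/
/-- Discrete intermediate value property: a sequence starting at or above `x`,
ending below `x`, with downward steps at most `ε`, comes within `ε` above `x`. -/
lemma waveAux_ivt (g : ℕ → ℝ) (K : ℕ) (x ε : ℝ)
    (h0 : x ≤ g 0) (hK : g K < x)
    (hstep : ∀ k, k < K → g k - g (k+1) ≤ ε) :
    ∃ k, k < K ∧ x ≤ g k ∧ g k - x < ε := by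
  have hex : ∃ j : ℕ, g j < x := ⟨K, hK⟩
  have hj : g (Nat.find hex) < x := Nat.find_spec hex
  have hjK : Nat.find hex ≤ K := Nat.find_min' hex hK
  have hj0 : Nat.find hex ≠ 0 := by
    intro h; rw [h] at hj; linarith
  have hx : x ≤ g (Nat.find hex - 1) := by
    by_contra h; push_neg at h
    exact (Nat.find_min hex (by omega)) h
  refine ⟨Nat.find hex - 1, by omega, hx, ?_⟩
  have h2 := hstep (Nat.find hex - 1) (by omega)
  have h3 : (Nat.find hex - 1) + 1 = Nat.find hex := by omega
  rw [h3] at h2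
  linarith

lemma waveAux_sqrt_diff (a b : ℝ) (ha : 0 ≤ a) (hb : 0 ≤ b) :
    (Real.sqrt a - Real.sqrt b) * (Real.sqrt a + Real.sqrt b) = a - b := by
  have h1 := Real.sq_sqrt ha
  have h2 := Real.sq_sqrt hb
  nlinarith

set_option maxHeartbeats 4000000 in
/-- On the stretched flat torus `ℝ/(αℤ) × ℝ/(βℤ)` with `α, β > 0`, every wave
front becomes dense. -/
theorem stretched_torus_waveFront_dense (α β : ℝ) (hα : α > 0) (hβ : β > 0) :
    ∀ P Q : ℝ × ℝ, ∀ ε : ℝ, ε > 0 → ∃ τ : ℝ, ∀ t : ℝ, t > τ →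
      ∃ w : ℝ × ℝ, eDist w P = t ∧
        ∃ m n : ℤ, eDist (w.1 + α * (m : ℝ), w.2 + β * (n : ℝ)) Q < ε := by
  intro P Q ε hε
  have hcarg : (0:ℝ) ≤ 2*α/β^2 + 1 := by positivity
  obtain ⟨c, hc_def⟩ : ∃ c : ℝ, c = Real.sqrt (2*α/β^2 + 1) := ⟨_, rfl⟩
  have hc2 : c^2 = 2*α/β^2 + 1 := by rw [hc_def]; exact Real.sq_sqrt hcarg
  have hc1 : (1:ℝ) ≤ c := by
    have h1 : Real.sqrt 1 ≤ Real.sqrt (2*α/β^2 + 1) := by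
      apply Real.sqrt_le_sqrt
      have : (0:ℝ) ≤ 2*α/β^2 := by positivity
      linarith
    rw [Real.sqrt_one] at h1
    rw [hc_def]; exact h1
  have hc0 : (0:ℝ) ≤ c := by linarith
  have hnum : (0:ℝ) ≤ (4*β^2*c+10*β^2+1)/ε := by positivity
  have hnum2 : (0:ℝ) ≤ 2*(β*c+2*β+1) := by positivity
  obtain ⟨M, hM_def⟩ : ∃ M : ℝ,
      M = 1 + 2*(β*c+2*β+1) + (4*β^2*c+10*β^2+1)/ε := ⟨_, rfl⟩
  have hM1 : (1:ℝ) ≤ M := by rw [hM_def]; linarith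
  refine ⟨M^2, ?_⟩
  intro t ht
  have hM0 : (0:ℝ) ≤ M := by linarith
  obtain ⟨s, hs_def⟩ : ∃ s : ℝ, s = Real.sqrt t := ⟨_, rfl⟩
  have hs : M < s := by
    have h := Real.sqrt_lt_sqrt (by positivity) ht
    rw [Real.sqrt_sq hM0] at h
    rw [hs_def]; exact h
  have hs1 : (1:ℝ) ≤ s := le_trans hM1 hs.le
  have hs0 : (0:ℝ) ≤ s := by linarith
  have hst : s^2 = t := by rw [hs_def]; exact Real.sq_sqrt (by nlinarith)
  have ht1 : (1:ℝ) ≤ t := by nlinarith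
  have ht0 : (0:ℝ) < t := by linarith
  obtain ⟨K, hK_def⟩ : ∃ K : ℕ, K = ⌈c*s⌉₊ := ⟨_, rfl⟩
  have hK1 : c*s ≤ (K:ℝ) := by rw [hK_def]; exact Nat.le_ceil _
  have hK2 : (K:ℝ) ≤ c*s + 1 := by
    rw [hK_def]; exact le_of_lt (Nat.ceil_lt_add_one (by positivity))
  have hKpos : (1:ℝ) ≤ (K:ℝ) := by nlinarith
  -- the three key numeric inequalities
  have hsa : 2*(β*c+2*β+1) ≤ s := by rw [hM_def] at hs; linarith
  have hss : s*s = t := by rw [← hst]; ring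
  have hA : β*((K:ℝ)+1) ≤ t/2 := by
    have e1 : s*(2*(β*c+2*β+1)) ≤ s*s := mul_le_mul_of_nonneg_left hsa hs0
    have e2 : β*(K:ℝ) ≤ β*(c*s+1) := mul_le_mul_of_nonneg_left hK2 hβ.le
    have e3 : β*1 ≤ β*s := mul_le_mul_of_nonneg_left hs1 hβ.le
    nlinarith
  have hsb : (4*β^2*c+10*β^2+1) ≤ ε*s := by
    have h : (4*β^2*c+10*β^2+1)/ε ≤ s := by rw [hM_def] at hs; linarith
    calc (4*β^2*c+10*β^2+1) = ((4*β^2*c+10*β^2+1)/ε)*ε := by field_simp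
    _ ≤ s*ε := mul_le_mul_of_nonneg_right h hε.le
    _ = ε*s := by ring
  have hB : 2*β^2*(2*(K:ℝ)+3) ≤ ε*t := by
    have e1 : s*(4*β^2*c+10*β^2+1) ≤ s*(ε*s) := mul_le_mul_of_nonneg_left hsb hs0
    have e2 : (4*β^2)*(K:ℝ) ≤ (4*β^2)*(c*s+1) :=
      mul_le_mul_of_nonneg_left hK2 (by positivity)
    have e3 : β^2*1 ≤ β^2*s := mul_le_mul_of_nonneg_left hs1 (by positivity)
    nlinarith
  have hC : 2*α*t ≤ β^2*((K:ℝ)^2-1) := by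
    have hcs0 : (0:ℝ) ≤ c*s := by positivity
    have hK1sq : (c*s)^2 ≤ (K:ℝ)^2 := by nlinarith
    have e1 : β^2*(c*s)^2 ≤ β^2*(K:ℝ)^2 := mul_le_mul_of_nonneg_left hK1sq (by positivity)
    have e2 : β^2*(c*s)^2 = (2*α+β^2)*t := by
      have hb : β^2*(2*α/β^2+1) = 2*α+β^2 := by field_simp
      calc β^2*(c*s)^2 = (β^2*(2*α/β^2+1))*s^2 := by rw [mul_pow, hc2]; ring
      _ = (2*α+β^2)*t := by rw [hb, hst]
    have e3 : β^2*1 ≤ β^2*t := mul_le_mul_of_nonneg_left ht1 (by positivity)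
    nlinarith
  -- the sequence of second coordinates
  obtain ⟨d, hd0, hd1, hds, hdmatch⟩ :
      ∃ d : ℕ → ℝ, 0 ≤ d 0 ∧ d 0 ≤ β ∧ (∀ k : ℕ, d (k+1) = d k + β) ∧
        (∀ k : ℕ, ∃ n : ℤ, P.2 + d k + β*(n:ℝ) = Q.2) := by
    refine ⟨fun k => β * Int.fract ((Q.2 - P.2)/β) + β*(k:ℝ), ?_, ?_, ?_, ?_⟩
    · simp
      exact mul_nonneg hβ.le (Int.fract_nonneg _)
    · simp
      nlinarith [Int.fract_lt_one ((Q.2 - P.2)/β), Int.fract_nonneg ((Q.2 - P.2)/β)]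
    · intro k; push_cast; ring
    · intro k
      refine ⟨⌊(Q.2 - P.2)/β⌋ - k, ?_⟩
      rw [Int.fract]
      push_cast
      field_simp
      ring
  have hdk : ∀ k : ℕ, d k = d 0 + β*(k:ℝ) := by
    intro k
    induction k with
    | zero => simp
    | succ n ih => rw [hds n, ih]; push_cast; ring
  have hdlb : ∀ k : ℕ, β*(k:ℝ) ≤ d k := by
    intro k; rw [hdk k]; linarith
  have hdub : ∀ k : ℕ, d k ≤ β*((k:ℝ)+1) := by
    intro k; rw [hdk k]; nlinarith
  have hdnn : ∀ k : ℕ, 0 ≤ d k := by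
    intro k
    have h1 := hdlb k
    have h2 : (0:ℝ) ≤ β*(k:ℝ) := by positivity
    linarith
  have hdt : ∀ k : ℕ, k ≤ K → d k ≤ t/2 := by
    intro k hk
    have hkr : (k:ℝ) ≤ (K:ℝ) := by exact_mod_cast hk
    have h1 : β*((k:ℝ)+1) ≤ β*((K:ℝ)+1) := by nlinarith
    linarith [hdub k]
  -- the sequence of first coordinates
  obtain ⟨g, hg⟩ : ∃ g : ℕ → ℝ, ∀ k, g k = Real.sqrt (t^2 - (d k)^2) :=
    ⟨_, fun _ => rfl⟩
  have hgnn : ∀ k : ℕ, 0 ≤ g k := by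
    intro k; rw [hg k]; exact Real.sqrt_nonneg _
  have hargnn : ∀ k : ℕ, k ≤ K → 0 ≤ t^2 - (d k)^2 := by
    intro k hk
    have h1 := hdt k hk
    have h2 := hdnn k
    nlinarith
  have hgsq : ∀ k : ℕ, k ≤ K → (g k)^2 = t^2 - (d k)^2 := by
    intro k hk
    rw [hg k]
    exact Real.sq_sqrt (hargnn k hk)
  have hgub : ∀ k : ℕ, g k ≤ t := by
    intro k
    rw [hg k]
    calc Real.sqrt (t^2 - (d k)^2) ≤ Real.sqrt (t^2) := by
          apply Real.sqrt_le_sqrt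
          nlinarith [hdnn k, sq_nonneg (d k)]
    _ = t := Real.sqrt_sq ht0.le
  have hglb : ∀ k : ℕ, k ≤ K → t/2 ≤ g k := by
    intro k hk
    have h1 := hdt k hk
    have h2 := hdnn k
    have h3 : (t/2)^2 ≤ t^2 - (d k)^2 := by nlinarith
    have h4 : Real.sqrt ((t/2)^2) ≤ Real.sqrt (t^2 - (d k)^2) := Real.sqrt_le_sqrt h3
    rw [Real.sqrt_sq (by linarith)] at h4
    rw [hg k]; exact h4
  -- step bound
  have hstep : ∀ k : ℕ, k < K → g k - g (k+1) ≤ ε := by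
    intro k hk
    have hk1 : k ≤ K := hk.le
    have hk2 : k + 1 ≤ K := hk
    have hid : (g k - g (k+1)) * (g k + g (k+1)) = (d (k+1))^2 - (d k)^2 := by
      have e1 := hgsq k hk1
      have e2 := hgsq (k+1) hk2
      linear_combination e1 - e2
    have hNum : (d (k+1))^2 - (d k)^2 ≤ β^2*(2*(K:ℝ)+3) := by
      have hkk : (k:ℝ) + 1 ≤ (K:ℝ) := by exact_mod_cast hk
      have h5 := hdub k
      have hdkub : d k ≤ β*(K:ℝ) := by
        have h6 : β*((k:ℝ)+1) ≤ β*(K:ℝ) := mul_le_mul_of_nonneg_left hkk hβ.le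
        linarith
      have h7 : 2*β*(d k) ≤ 2*β*(β*(K:ℝ)) :=
        mul_le_mul_of_nonneg_left hdkub (by positivity)
      have h9 : (d (k+1))^2 - (d k)^2 = 2*β*(d k) + β^2 := by rw [hds k]; ring
      have h12 : (0:ℝ) ≤ β^2 := sq_nonneg β
      have h10 : 2*β*(β*(K:ℝ)) = β^2*(2*(K:ℝ)) := by ring
      have h11 : β^2*(2*(K:ℝ)+3) = β^2*(2*(K:ℝ)) + 3*β^2 := by ring
      linarith
    have hS : t/2 ≤ g k + g (k+1) := by
      have h6 := hglb (k+1) hk2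
      have h7 := hgnn k
      linarith
    have hRnn : 0 ≤ (d (k+1))^2 - (d k)^2 := by
      rw [hds k]
      nlinarith [hdnn k]
    have hEnn : 0 ≤ g k - g (k+1) := by
      by_contra hcon
      push_neg at hcon
      have hSpos : 0 < g k + g (k+1) := by linarith
      have : (g k - g (k+1)) * (g k + g (k+1)) < 0 := mul_neg_of_neg_of_pos hcon hSpos
      linarith
    have hεS : ε*(t/2) ≤ ε*(g k + g (k+1)) := mul_le_mul_of_nonneg_left hS hε.le
    by_contra hcon
    push_neg at hcon
    have hSpos : 0 < g k + g (k+1) := by linarith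
    have h11 : ε*(g k + g (k+1)) < (g k - g (k+1))*(g k + g (k+1)) :=
      mul_lt_mul_of_pos_right hcon hSpos
    linarith [hid, hNum, hB, hεS]
  -- range bound
  have hrange : α ≤ g 0 - g K := by
    have e0 := hgsq 0 (Nat.zero_le K)
    have eK := hgsq K le_rfl
    have hid : (g 0 - g K) * (g 0 + g K) = (d K)^2 - (d 0)^2 := by
      linear_combination e0 - eK
    have hdK : β*(K:ℝ) ≤ d K := hdlb K
    have hNum : β^2*((K:ℝ)^2-1) ≤ (d K)^2 - (d 0)^2 := by
      have h1 : (β*(K:ℝ))^2 ≤ (d K)^2 := pow_le_pow_left₀ (by positivity) hdK 2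
      have h2 : (d 0)^2 ≤ β^2 := pow_le_pow_left₀ hd0 hd1 2
      have h4 : (β*(K:ℝ))^2 = β^2*(K:ℝ)^2 := by ring
      have h5 : β^2*((K:ℝ)^2-1) = β^2*(K:ℝ)^2 - β^2 := by ring
      linarith
    have hE : 0 ≤ g 0 - g K := by
      by_contra hcon
      push_neg at hcon
      have hd0K : d 0 ≤ d K := by
        rw [hdk K]
        have h16 : (0:ℝ) ≤ β*(K:ℝ) := by positivity
        linarith
      have hRnn : 0 ≤ (d K)^2 - (d 0)^2 := by
        have h17 := pow_le_pow_left₀ hd0 hd0K 2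
        linarith
      have hSpos : 0 < g 0 + g K := by
        have := hglb 0 (Nat.zero_le K)
        have := hgnn K
        linarith
      have : (g 0 - g K) * (g 0 + g K) < 0 := mul_neg_of_neg_of_pos hcon hSpos
      linarith
    have hS : g 0 + g K ≤ 2*t := by linarith [hgub 0, hgub K]
    by_contra hcon
    push_neg at hcon
    have h13 : (g 0 - g K)*(g 0 + g K) ≤ (g 0 - g K)*(2*t) :=
      mul_le_mul_of_nonneg_left hS hE
    have h14 : (g 0 - g K)*(2*t) < α*(2*t) :=
      mul_lt_mul_of_pos_right hcon (by linarith)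
    have h15 : α*(2*t) = 2*α*t := by ring
    linarith [hid, hNum, hC]
  -- choose m
  obtain ⟨m, hm_def⟩ : ∃ m : ℤ, m = ⌈(Q.1 - P.1 - g 0)/α⌉ := ⟨_, rfl⟩
  obtain ⟨x, hx_def⟩ : ∃ x : ℝ, x = Q.1 - P.1 - α*(m:ℝ) := ⟨_, rfl⟩
  have hx1 : x ≤ g 0 := by
    have h := Int.le_ceil ((Q.1 - P.1 - g 0)/α)
    rw [← hm_def] at h
    have h2 := mul_le_mul_of_nonneg_left h hα.le
    rw [mul_div_cancel₀ _ (ne_of_gt hα)] at h2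
    rw [hx_def]; linarith
  have hx2 : g 0 - α < x := by
    have h := Int.ceil_lt_add_one ((Q.1 - P.1 - g 0)/α)
    rw [← hm_def] at h
    have h2 := mul_lt_mul_of_pos_left h hα
    rw [mul_add, mul_div_cancel₀ _ (ne_of_gt hα)] at h2
    rw [hx_def]; linarith
  have hxK : g K < x := by linarith
  -- discrete intermediate value
  obtain ⟨k, hkK, hgk, hclose⟩ := waveAux_ivt g K x ε hx1 hxK hstep
  obtain ⟨n, hn⟩ := hdmatch k
  -- assemble the witness
  refine ⟨(P.1 + g k, P.2 + d k), ?_, m, n, ?_⟩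
  · show Real.sqrt ((P.1 + g k - P.1)^2 + (P.2 + d k - P.2)^2) = t
    have harg : (P.1 + g k - P.1)^2 + (P.2 + d k - P.2)^2 = t^2 := by
      have h := hgsq k hkK.le
      ring_nf
      ring_nf at h
      linarith
    rw [harg]
    exact Real.sqrt_sq ht0.le
  · show Real.sqrt ((P.1 + g k + α*(m:ℝ) - Q.1)^2 + (P.2 + d k + β*(n:ℝ) - Q.2)^2) < ε
    have h2 : P.2 + d k + β*(n:ℝ) - Q.2 = 0 := by rw [hn]; ring
    have h1 : P.1 + g k + α*(m:ℝ) - Q.1 = g k - x := by rw [hx_def]; ring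
    rw [h1, h2]
    have h3 : (g k - x)^2 + (0:ℝ)^2 = (g k - x)^2 := by ring
    rw [h3, Real.sqrt_sq (by linarith)]
    linarith
end

section
/- Let t ≥ 2 and let C_t = {x ∈ ℝ² : |x| = t} be the circle of radius t. Then for every point p ∈ ℝ², the distance from p to the set C_t + ℤ² = {c + v : c ∈ C_t, v ∈ ℤ²} is at most 3/√t for all sufficiently large t. (Quantitative density: the lattice translates of the circle of radius t are 3/√t-dense in the plane.) -/
set_option maxHeartbeats 2000000 in
/-- Quantitative density: for sufficiently large `t ≥ 2`, the integer lattice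
translates of the circle of radius `t` are `3/√t`-dense in the plane. -/
theorem circle_translates_dense :
    ∃ T : ℝ, ∀ t : ℝ, t ≥ 2 → t > T → ∀ p : ℝ × ℝ,
      ∃ w : ℝ × ℝ, eDist w (0, 0) = t ∧
        ∃ m n : ℤ, eDist (w.1 + (m : ℝ), w.2 + (n : ℝ)) p ≤ 3 / Real.sqrt t := by
  classical
  use 100
  intro t ht2 ht100 p
  obtain ⟨x, y⟩ := p
  have ht0 : (0:ℝ) < t := by linarith
  set r := Real.sqrt t with hr
  have hr2 : r ^ 2 = t := Real.sq_sqrt ht0.le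
  have hr10 : r ≥ 10 := by nlinarith [Real.sqrt_nonneg t]
  set b : ℤ := ⌈y - t⌉ with hbdef
  set s : ℝ := y - (b:ℝ) with hsdef
  have hs1 : s ≤ t := by
    have := Int.le_ceil (y - t); rw [hsdef, hbdef]; linarith
  have hs2 : t - 1 < s := by
    have := Int.ceil_lt_add_one (y - t); rw [hsdef, hbdef]; linarith
  have hs0 : (0:ℝ) < s := by linarith
  set c : ℝ := (⌈x⌉ : ℝ) - x with hcdef
  have hc0 : 0 ≤ c := by have := Int.le_ceil x; rw [hcdef]; linarith
  have hc1 : c < 1 := by have := Int.ceil_lt_add_one x; rw [hcdef]; linarith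
  have hu : Real.sqrt (2 * t) = Real.sqrt 2 * r := by
    rw [Real.sqrt_mul (by norm_num)]
  have hs2t : Real.sqrt 2 ≤ 1.5 := by
    nlinarith [Real.sq_sqrt (by norm_num : (0:ℝ) ≤ 2), Real.sqrt_nonneg 2]
  set j₀ : ℕ := ⌈Real.sqrt (2 * t)⌉₊ with hj₀def
  have hj₀ge : Real.sqrt (2*t) ≤ (j₀ : ℝ) := Nat.le_ceil _
  have hj₀lt : (j₀ : ℝ) < Real.sqrt (2*t) + 1 := Nat.ceil_lt_add_one (Real.sqrt_nonneg _)
  have hPj₀ : t ^ 2 ≤ ((j₀ : ℝ) + c) ^ 2 + s ^ 2 := by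
    have h2t : (j₀:ℝ)^2 ≥ 2*t := by
      nlinarith [Real.sq_sqrt (by positivity : (0:ℝ) ≤ 2*t), Real.sqrt_nonneg (2*t)]
    nlinarith [hs0.le, hc0, hs1, hs2]
  have hex : ∃ j : ℕ, t ^ 2 ≤ ((j : ℝ) + c) ^ 2 + s ^ 2 := ⟨j₀, hPj₀⟩
  set J : ℕ := Nat.find hex with hJdef
  have hPJ : t ^ 2 ≤ ((J : ℝ) + c) ^ 2 + s ^ 2 := Nat.find_spec hex
  have hJle : J ≤ j₀ := Nat.find_le hPj₀
  have hminall : ∀ k : ℕ, k < J → ¬ t ^ 2 ≤ ((k : ℝ) + c) ^ 2 + s ^ 2 :=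
    fun k hk => Nat.find_min hex hk
  clear_value J
  clear hJdef hex
  clear_value b j₀
  clear hbdef hj₀def
  have hJle' : (J : ℝ) ≤ (j₀ : ℝ) := by exact_mod_cast hJle
  have hbound : ((J:ℝ) + c)^2 + s^2 ≤ t^2 + 6*r := by
    rcases Nat.eq_zero_or_pos J with h0 | hpos
    · rw [h0]; push_cast
      nlinarith [hs1, hs0.le, hc0, hc1, hr10]
    · have hmin : ¬ t ^ 2 ≤ (((J - 1 : ℕ) : ℝ) + c) ^ 2 + s ^ 2 :=
        hminall _ (by omega)
      push_neg at hmin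
      have hcast : ((J - 1 : ℕ) : ℝ) = (J : ℝ) - 1 := by
        have h1 : (1:ℕ) ≤ J := hpos
        push_cast [h1]; ring
      rw [hcast] at hmin
      have hJr : (J : ℝ) ≤ 1.5 * r + 1 := by
        have h1 : (j₀:ℝ) < 1.5 * r + 1 := by
          have := hj₀lt; rw [hu] at this; nlinarith [hr10]
        linarith
      have hid : ((J:ℝ)+c)^2 = ((J:ℝ)-1+c)^2 + 2*((J:ℝ)+c) - 1 := by ring
      linarith [hmin, hid, hJr, hc1, hr10, hc0]
  set D : ℝ := Real.sqrt (((J:ℝ)+c)^2 + s^2) with hDdef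
  have hDnn : 0 ≤ D := Real.sqrt_nonneg _
  have hD2 : D^2 = ((J:ℝ)+c)^2 + s^2 := Real.sq_sqrt (by positivity)
  have htD : t ≤ D := by
    have h := Real.sqrt_le_sqrt hPJ
    rwa [Real.sqrt_sq ht0.le] at h
  have hDpos : 0 < D := lt_of_lt_of_le ht0 htD
  have hrpos : (0:ℝ) < r := by linarith
  have hDle : D ≤ t + 3/r := by
    have key : D^2 ≤ (t + 3/r)^2 := by
      have h1 : (t + 3/r)^2 = t^2 + 6*(t/r) + 9/r^2 := by
        field_simp; ring
      have h2 : t / r = r := by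
        rw [← hr2]; field_simp
      have h9 : (0:ℝ) ≤ 9 / r^2 := by positivity
      rw [h1, h2]
      linarith [hbound, hD2.le]
    have h := Real.sqrt_le_sqrt key
    rwa [Real.sqrt_sq hDnn, Real.sqrt_sq (by positivity)] at h
  set u : ℝ := (J:ℝ) + c with hudef
  refine ⟨(t * (-u) / D, t * s / D), ?_, ⟨⌈x⌉ + (J:ℤ), b, ?_⟩⟩
  · simp only [eDist]
    have h : (t * (-u) / D - 0)^2 + (t * s / D - 0)^2 = t^2 := by
      have h1 : (t * (-u) / D - 0)^2 + (t * s / D - 0)^2 = (u^2 + s^2) * (t/D)^2 := by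
        ring
      rw [h1, ← hD2, div_pow, mul_div_cancel₀ _ (pow_ne_zero 2 hDpos.ne')]
    rw [h, Real.sqrt_sq ht0.le]
  · simp only [eDist]
    have e1 : t * (-u) / D + ((⌈x⌉ + (J:ℤ) : ℤ) : ℝ) - x = u * (1 - t/D) := by
      rw [hudef, hcdef]; push_cast; field_simp; ring
    have e2 : t * s / D + (b:ℝ) - y = -(s * (1 - t/D)) := by
      rw [hsdef]; field_simp; ring
    have key : (t * (-u) / D + ((⌈x⌉ + (J:ℤ) : ℤ) : ℝ) - x)^2 + (t * s / D + (b:ℝ) - y)^2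
        = (D - t)^2 := by
      rw [e1, e2]
      calc (u * (1 - t/D))^2 + (-(s * (1 - t/D)))^2 = (u^2 + s^2) * (1 - t/D)^2 := by ring
      _ = D^2 * (1 - t/D)^2 := by rw [hD2]
      _ = (D * (1 - t/D))^2 := by ring
      _ = (D - t)^2 := by rw [mul_sub, mul_one, mul_div_cancel₀ _ hDpos.ne']
    rw [key, Real.sqrt_sq_eq_abs, abs_of_nonneg (by linarith : (0:ℝ) ≤ D - t)]
    linarith
end

section
/- Even a restricted sector of the wave front becomes dense on the flat torus: for any nondegenerate arc A = {(cos s, sin s) : s ∈ [α, β]} with α < β, and any P ∈ ℝ², the sets W_t(P, A) = image in ℝ²/ℤ² of {P + t·a : a ∈ A} become dense: for every ball B in the torus there is τ with W_t(P,A) ∩ B ≠ ∅ for all t > τ. -/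
open Complex ComplexConjugate Set
open scoped Real

lemma sin_ne_zero_of_mem_Ioo_mul_pi {k : ℤ} {s : ℝ} (h : s ∈ Ioo (k * π) ((k + 1) * π)) :
    Real.sin s ≠ 0 := by
  rw [Real.sin_ne_zero_iff]
  rintro n rfl
  have hk : (k : ℝ) < n := lt_of_mul_lt_mul_right h.1 Real.pi_pos.le
  have hn : (n : ℝ) < k + 1 := lt_of_mul_lt_mul_right h.2 Real.pi_pos.le
  norm_cast at hk hn
  omega

lemma exists_Icc_subset_Ioo_sin_ne_zero {α β : ℝ} (h : α < β) :
    ∃ x y, x ∈ Ioo α β ∧ y ∈ Ioo α β ∧ x < y ∧ y - x < π ∧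
      ∀ s ∈ Icc x y, Real.sin s ≠ 0 := by
  set k : ℤ := ⌊α / π⌋
  have hk : k * π ≤ α := (le_div_iff₀ Real.pi_pos).mp (Int.floor_le _)
  have hk1 : α < (k + 1) * π := (div_lt_iff₀ Real.pi_pos).mp (Int.lt_floor_add_one _)
  obtain ⟨y₀, hy₀β, hy₀k, hαy₀⟩ : ∃ y₀, y₀ ≤ β ∧ y₀ ≤ (k + 1) * π ∧ α < y₀ :=
    ⟨min β ((k + 1) * π), min_le_left _ _, min_le_right _ _, lt_min h hk1⟩
  refine ⟨(2 * α + y₀) / 3, (α + 2 * y₀) / 3, ⟨by linarith, by linarith⟩,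
    ⟨by linarith, by linarith⟩, by linarith, by linarith [Real.pi_pos], fun s hs => ?_⟩
  exact sin_ne_zero_of_mem_Ioo_mul_pi ⟨by linarith [hs.1], by linarith [hs.2]⟩

lemma exists_sq_mul_add_one_div_sq_mem_Ioo {u w : ℝ} (h : u < w) (R : ℝ) :
    ∃ n : ℕ, 0 < n ∧ R ≤ n ∧ ∃ m : ℤ, ((n : ℝ) * m + 1) / (n : ℝ) ^ 2 ∈ Ioo u w := by
  obtain ⟨n, hn⟩ := exists_nat_gt (max (max R 1) (2 / (w - u)))
  obtain ⟨⟨hRn, hn1⟩, hn2⟩ : (R < n ∧ 1 < (n : ℝ)) ∧ 2 / (w - u) < n := by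
    simpa only [max_lt_iff] using hn
  have hn0 : (0 : ℝ) < n := by linarith
  refine ⟨n, by exact_mod_cast hn0, hRn.le, ⌊u * n⌋ + 1, ?_⟩
  have hfl := Int.floor_le (u * n)
  have hlt := Int.lt_floor_add_one (u * n)
  rw [div_lt_iff₀ (by linarith)] at hn2
  rw [mem_Ioo, lt_div_iff₀ (by positivity), div_lt_iff₀ (by positivity)]
  push_cast
  constructor <;> nlinarith

lemma isCoprime_neg_sq_mul_add_one (n m : ℤ) : IsCoprime (-n ^ 2) (n * m + 1) :=
  ⟨-m ^ 2, 1 - n * m, by ring⟩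

lemma add_mul_I_eq_mul_I_mul_exp {a b θ : ℝ} (h : a * Real.cos θ + b * Real.sin θ = 0) :
    (a + b * I : ℂ) = (b * Real.cos θ - a * Real.sin θ : ℝ) * (I * exp (θ * I)) := by
  have h' : (a * Real.cos θ + b * Real.sin θ : ℂ) = 0 := by exact_mod_cast h
  have hp : (Real.sin θ ^ 2 + Real.cos θ ^ 2 : ℂ) = 1 := by
    exact_mod_cast Real.sin_sq_add_cos_sq θ
  rw [exp_mul_I]
  push_cast at h' hp ⊢
  linear_combination (cos θ + sin θ * I) * h' - (a + b * I) * hp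
    - (b * cos θ - a * sin θ) * sin θ * I_sq

lemma exists_mem_Ioo_isCoprime_eq_mul_I_mul_exp {α β : ℝ} (h : α < β) (R : ℝ) :
    ∃ θ ∈ Ioo α β, ∃ a b : ℤ, IsCoprime a b ∧ ∃ c : ℝ, R ≤ |c| ∧
      (a + b * I : ℂ) = c * (I * exp (θ * I)) := by
  obtain ⟨x, y, hx, hy, hxy, hyx, hsin⟩ := exists_Icc_subset_Ioo_sin_ne_zero h
  have hcot : Real.cos x / Real.sin x ≠ Real.cos y / Real.sin y := by
    intro heq
    rw [div_eq_div_iff (hsin x ⟨le_rfl, hxy.le⟩) (hsin y ⟨hxy.le, le_rfl⟩)] at heq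
    have : Real.sin (y - x) = 0 := by rw [Real.sin_sub]; linarith
    exact (Real.sin_pos_of_pos_of_lt_pi (sub_pos.2 hxy) hyx).ne' this
  obtain ⟨n, hn0, hn, m, hr⟩ := exists_sq_mul_add_one_div_sq_mem_Ioo (min_lt_max.2 hcot) R
  have hcont : ContinuousOn (fun s => Real.cos s / Real.sin s) (uIcc x y) :=
    Real.continuous_cos.continuousOn.div Real.continuous_sin.continuousOn
      fun s hs => hsin s (by rwa [uIcc_of_le hxy.le] at hs)
  obtain ⟨θ, hθ, hθr⟩ := intermediate_value_uIcc hcont (Ioo_subset_Icc_self hr)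
  rw [uIcc_of_le hxy.le] at hθ
  set a : ℤ := -n ^ 2
  set b : ℤ := n * m + 1
  have hperp : (a : ℝ) * Real.cos θ + b * Real.sin θ = 0 := by
    rw [div_eq_div_iff (hsin θ hθ) (by positivity)] at hθr
    push_cast [a, b]
    linear_combination -hθr
  set c := (b : ℝ) * Real.cos θ - a * Real.sin θ
  have hv : (a + b * I : ℂ) = c * (I * exp (θ * I)) := by
    exact_mod_cast add_mul_I_eq_mul_I_mul_exp hperp
  refine ⟨θ, ⟨hx.1.trans_le hθ.1, hθ.2.trans_lt hy.2⟩, a, b, isCoprime_neg_sq_mul_add_one n m,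
    c, ?_, hv⟩
  have hn1 : (1 : ℝ) ≤ n := by exact_mod_cast hn0
  calc R ≤ (n : ℝ) ^ 2 := by nlinarith
    _ = |(a + b * I : ℂ).re| := by simp [a, sq]
    _ ≤ ‖(a + b * I : ℂ)‖ := abs_re_le_norm _
    _ = |c| := by rw [hv]; simp

lemma norm_sub_re_div_normSq_mul_mul_norm (v z : ℂ) (hv : v ≠ 0) :
    ‖z - ((conj v * z).re / normSq v : ℝ) * v‖ * ‖v‖ = |(conj v * z).im| := by
  have hv' : normSq v ≠ 0 := normSq_eq_zero.not.2 hv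
  have : (z - ((conj v * z).re / normSq v : ℝ) * v) * conj v = (conj v * z).im * I := by
    rw [sub_mul, mul_assoc, mul_conj, ← ofReal_mul, div_mul_cancel₀ _ hv', mul_comm z]
    linear_combination -(re_add_im (conj v * z))
  rw [← norm_conj v, ← norm_mul, this, norm_mul, norm_I, mul_one, norm_real, Real.norm_eq_abs]

lemma exists_abs_im_conj_mul_add_le {a b : ℤ} (hab : IsCoprime a b) (z : ℂ) :
    ∃ m n : ℤ, |(conj (a + b * I) * (z + (m + n * I))).im| ≤ 1 / 2 := by
  obtain ⟨u, w, huw⟩ := hab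
  set k := round (conj (a + b * I) * z).im
  refine ⟨k * w, -(k * u), ?_⟩
  have huw' : (u : ℝ) * a + w * b = 1 := by exact_mod_cast huw
  have : (conj (a + b * I) * (z + ((k * w : ℤ) + (-(k * u) : ℤ) * I))).im
      = (conj (a + b * I) * z).im - k := by
    simp only [map_add, map_intCast, map_mul, conj_I, mul_neg, Int.cast_mul, Int.cast_neg,
      neg_mul, mul_im, add_re, intCast_re, neg_re, mul_re, I_re, mul_zero, intCast_im, I_im,
      mul_one, sub_self, neg_zero, add_zero, add_im, zero_mul, neg_im, sub_zero, zero_add]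
    linear_combination (-(k : ℝ)) * huw'
  rw [this]
  exact abs_sub_round _

lemma exists_norm_add_mul_add_le {a b : ℤ} (hab : IsCoprime a b) (z : ℂ) :
    ∃ l ∈ Icc (0 : ℝ) 1, ∃ m n : ℤ,
      ‖z + l * (a + b * I) + (m + n * I)‖ ≤ 1 / (2 * ‖(a + b * I : ℂ)‖) := by
  set v : ℂ := a + b * I
  have hv : v ≠ 0 := by
    intro h0
    have ha : a = 0 := by simpa [v] using congrArg re h0
    have hb : b = 0 := by simpa [v] using congrArg im h0
    subst ha hb
    exact not_isCoprime_zero_zero hab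
  obtain ⟨m, n, hmn⟩ := exists_abs_im_conj_mul_add_le hab z
  set z' := z + (m + n * I)
  set μ := (conj v * z').re / normSq v
  refine ⟨Int.fract (-μ), ⟨Int.fract_nonneg _, (Int.fract_lt_one _).le⟩,
    m + ⌊-μ⌋ * a, n + ⌊-μ⌋ * b, ?_⟩
  have hsplit : z + Int.fract (-μ) * v + ((m + ⌊-μ⌋ * a : ℤ) + (n + ⌊-μ⌋ * b : ℤ) * I)
      = z' - μ * v := by
    have h : ((Int.fract (-μ) : ℝ) : ℂ) + ⌊-μ⌋ = -μ := by exact_mod_cast Int.fract_add_floor (-μ)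
    push_cast [z', v]
    linear_combination (a + b * I : ℂ) * h
  rw [hsplit, le_div_iff₀ (by positivity)]
  have := norm_sub_re_div_normSq_mul_mul_norm v z' hv
  linarith

lemma norm_exp_add_mul_I_sub_le {θ φ : ℝ} (hφ : |φ| ≤ 1) :
    ‖exp ((θ + φ : ℝ) * I) - exp (θ * I) - φ * I * exp (θ * I)‖ ≤ φ ^ 2 := by
  have hx : ‖(φ : ℂ) * I‖ = |φ| := by simp
  have : exp ((θ + φ : ℝ) * I) - exp (θ * I) - φ * I * exp (θ * I)
      = exp (θ * I) * (exp (φ * I) - 1 - φ * I) := by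
    push_cast; rw [add_mul, exp_add]; ring
  rw [this, norm_mul, norm_exp_ofReal_mul_I, one_mul, ← sq_abs, ← hx]
  exact norm_exp_sub_one_sub_id_le (hx ▸ hφ)

lemma abs_mul_div_le_of_mem_Icc {l c t : ℝ} (hl : l ∈ Icc (0 : ℝ) 1) (ht : 0 < t) :
    |l * c / t| ≤ |c| / t := by
  rw [abs_div, abs_mul, abs_of_nonneg hl.1, abs_of_pos ht]
  exact div_le_div_of_nonneg_right (mul_le_of_le_one_left (abs_nonneg c) hl.2) ht.le

lemma norm_add_mul_exp_le {z : ℂ} {t c l θ : ℝ} (ht : 0 < t) (hct : |c| ≤ t)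
    (hl : l ∈ Icc (0 : ℝ) 1) :
    ‖z + t * exp ((θ + l * c / t : ℝ) * I)‖
      ≤ ‖z + t * exp (θ * I) + l * (c * (I * exp (θ * I)))‖ + c ^ 2 / t := by
  set φ := l * c / t
  have hφ : |φ| ≤ |c| / t := abs_mul_div_le_of_mem_Icc hl ht
  have ht' : (t : ℂ) ≠ 0 := by exact_mod_cast ht.ne'
  have hsplit : z + t * exp ((θ + φ : ℝ) * I) = (z + t * exp (θ * I) + l * (c * (I * exp (θ * I))))
      + t * (exp ((θ + φ : ℝ) * I) - exp (θ * I) - φ * I * exp (θ * I)) := by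
    simp only [φ]; push_cast; field_simp; ring
  rw [hsplit]
  refine (norm_add_le _ _).trans (add_le_add_right ?_ _)
  rw [norm_mul, norm_real, Real.norm_eq_abs, abs_of_pos ht]
  calc t * ‖exp ((θ + φ : ℝ) * I) - exp (θ * I) - φ * I * exp (θ * I)‖
      ≤ t * φ ^ 2 := by
        gcongr
        exact norm_exp_add_mul_I_sub_le (hφ.trans ((div_le_one ht).2 hct))
    _ ≤ t * (|c| / t) ^ 2 := by rw [← sq_abs φ]; gcongr
    _ = c ^ 2 / t := by field_simp; rw [sq_abs]

lemma eDist_eq_norm_add_exp (P Q : ℝ × ℝ) (t s : ℝ) (m n : ℤ) :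
    eDist (P.1 + t * Real.cos s + m, P.2 + t * Real.sin s + n) Q
      = ‖(P.1 + P.2 * I : ℂ) + t * exp (s * I) + (m + n * I) - (Q.1 + Q.2 * I)‖ := by
  rw [eDist, Complex.norm_def, normSq_apply, exp_mul_I]
  congr 1
  simp only [sub_re, add_re, ofReal_re, mul_re, I_re, mul_zero, ofReal_im, I_im, mul_one,
    sub_self, add_zero, cos_ofReal_re, sin_ofReal_re, sin_ofReal_im, add_im, cos_ofReal_im,
    mul_im, zero_add, zero_mul, sub_zero, intCast_re, intCast_im, sub_im]
  ring

/-- Even a restricted sector of the wave front becomes dense on the flat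
torus: for any nondegenerate arc of directions `s ∈ [α, β]` and any `P`, the
projected arc `{P + t (cos s, sin s)}` eventually meets every ball. -/
theorem sector_waveFront_dense (α β : ℝ) (hαβ : α < β) (P : ℝ × ℝ) :
    ∀ Q : ℝ × ℝ, ∀ ε : ℝ, ε > 0 → ∃ τ : ℝ, ∀ t : ℝ, t > τ →
      ∃ s ∈ Set.Icc α β, ∃ m n : ℤ,
        eDist (P.1 + t * Real.cos s + (m : ℝ),
          P.2 + t * Real.sin s + (n : ℝ)) Q < ε := by
  intro Q ε hε
  obtain ⟨θ, hθ, a, b, hab, c, hc, hv⟩ := exists_mem_Ioo_isCoprime_eq_mul_I_mul_exp hαβ (1 / ε)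
  have hc0 : 0 < |c| := (one_div_pos.2 hε).trans_le hc
  refine ⟨max (max (|c| / (θ - α)) (|c| / (β - θ))) (max |c| (2 * c ^ 2 / ε)), fun t ht => ?_⟩
  simp only [gt_iff_lt, max_lt_iff] at ht
  obtain ⟨⟨htα, htβ⟩, htc, htε⟩ := ht
  have ht0 : 0 < t := hc0.trans htc
  obtain ⟨l, hl, m, n, hmn⟩ := exists_norm_add_mul_add_le hab
    ((P.1 + P.2 * I : ℂ) + t * exp (θ * I) - (Q.1 + Q.2 * I))
  have hφ := abs_mul_div_le_of_mem_Icc (c := c) hl ht0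
  rw [div_lt_comm₀ (sub_pos.2 hθ.1) ht0] at htα
  rw [div_lt_comm₀ (sub_pos.2 hθ.2) ht0] at htβ
  refine ⟨θ + l * c / t,
    ⟨by linarith [neg_abs_le (l * c / t)], by linarith [le_abs_self (l * c / t)]⟩, m, n, ?_⟩
  have hvc : ‖(a + b * I : ℂ)‖ = |c| := by rw [hv]; simp
  rw [eDist_eq_norm_add_exp]
  calc _ = ‖((P.1 + P.2 * I : ℂ) + (m + n * I) - (Q.1 + Q.2 * I))
        + t * exp ((θ + l * c / t : ℝ) * I)‖ := by ring_nf
    _ ≤ ‖((P.1 + P.2 * I : ℂ) + (m + n * I) - (Q.1 + Q.2 * I)) + t * exp (θ * I)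
        + l * (c * (I * exp (θ * I)))‖ + c ^ 2 / t := norm_add_mul_exp_le ht0 htc.le hl
    _ = ‖(P.1 + P.2 * I : ℂ) + t * exp (θ * I) - (Q.1 + Q.2 * I) + l * (a + b * I)
        + (m + n * I)‖ + c ^ 2 / t := by rw [hv]; ring_nf
    _ ≤ 1 / (2 * |c|) + c ^ 2 / t := by rw [← hvc]; gcongr
    _ < ε / 2 + ε / 2 := by
        refine add_lt_add_of_le_of_lt ?_ ?_
        · rw [div_le_div_iff₀ (by positivity) two_pos]; rw [div_le_iff₀ hε] at hc; linarith
        · rw [div_lt_div_iff₀ ht0 two_pos]; rw [div_lt_iff₀ hε] at htε; linarith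
    _ = ε := add_halves ε
end

section
/- The number of integer lattice points in the closed annulus {x ∈ ℝ² : t ≤ |x| ≤ t + h} is at least 1 for all t ≥ T whenever h ≥ 3/√t and T is sufficiently large; consequently the circle of radius t centered at the origin passes within distance 3/√t of some lattice point for all large t. -/
lemma annulus_key (t : ℝ) (ht : t > 1) :
    ∃ v : ℤ × ℤ, t ^ 2 ≤ (v.1 : ℝ) ^ 2 + (v.2 : ℝ) ^ 2 ∧
      (v.1 : ℝ) ^ 2 + (v.2 : ℝ) ^ 2 ≤ t ^ 2 + 6 * Real.sqrt t := by
  set a : ℤ := ⌊t⌋ with ha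
  have hat : (a : ℝ) ≤ t := Int.floor_le t
  have hat' : t - 1 < (a : ℝ) := Int.sub_one_lt_floor t
  have ha0 : (0 : ℝ) ≤ (a : ℝ) := by linarith
  set A : ℝ := t ^ 2 - (a : ℝ) ^ 2 with hAdef
  have hA0 : 0 ≤ A := by nlinarith
  have hA2 : A ≤ 2 * t := by nlinarith
  set b : ℤ := ⌈Real.sqrt A⌉ with hb
  have hb1 : Real.sqrt A ≤ (b : ℝ) := Int.le_ceil _
  have hb2 : (b : ℝ) < Real.sqrt A + 1 := Int.ceil_lt_add_one _
  have hsA : Real.sqrt A ^ 2 = A := Real.sq_sqrt hA0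
  have hsAnn : 0 ≤ Real.sqrt A := Real.sqrt_nonneg A
  have hs : Real.sqrt t ^ 2 = t := Real.sq_sqrt (by linarith)
  have hs0 : 0 ≤ Real.sqrt t := Real.sqrt_nonneg t
  have hs1 : 1 ≤ Real.sqrt t := by nlinarith
  have h2 : Real.sqrt 2 ^ 2 = 2 := Real.sq_sqrt (by norm_num)
  have h2n : 0 ≤ Real.sqrt 2 := Real.sqrt_nonneg 2
  have h2b : Real.sqrt 2 ≤ 1.5 := by nlinarith
  have hAs : Real.sqrt A ≤ Real.sqrt 2 * Real.sqrt t := by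
    rw [← Real.sqrt_mul (by norm_num : (0:ℝ) ≤ 2) t]
    exact Real.sqrt_le_sqrt hA2
  refine ⟨(a, b), ?_, ?_⟩
  · have : A ≤ (b : ℝ) ^ 2 := by nlinarith
    simp only []
    nlinarith
  · have hbu : (b : ℝ) ^ 2 ≤ A + 2 * Real.sqrt A + 1 := by nlinarith
    have : 2 * Real.sqrt A + 1 ≤ 6 * Real.sqrt t := by nlinarith
    simp only []
    nlinarith

/-- For all sufficiently large `t`, every annulus `{t ≤ |x| ≤ t + h}` with
`h ≥ 3/√t` contains an integer lattice point; consequently the circle of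
radius `t` passes within `3/√t` of some lattice point. -/
theorem annulus_contains_lattice_point :
    ∃ T : ℝ, ∀ t : ℝ, t > T →
      (∀ h : ℝ, h ≥ 3 / Real.sqrt t →
        ∃ v : ℤ × ℤ, t ≤ Real.sqrt ((v.1 : ℝ) ^ 2 + (v.2 : ℝ) ^ 2) ∧
          Real.sqrt ((v.1 : ℝ) ^ 2 + (v.2 : ℝ) ^ 2) ≤ t + h) ∧
      (∃ v : ℤ × ℤ,
        |Real.sqrt ((v.1 : ℝ) ^ 2 + (v.2 : ℝ) ^ 2) - t| ≤ 3 / Real.sqrt t) := by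
  refine ⟨1, fun t ht => ?_⟩
  have ht0 : (0 : ℝ) < t := by linarith
  have hs : Real.sqrt t ^ 2 = t := Real.sq_sqrt ht0.le
  have hs0 : 0 < Real.sqrt t := Real.sqrt_pos.mpr ht0
  have hs1 : 1 ≤ Real.sqrt t := by nlinarith [Real.sqrt_nonneg t]
  have main : ∀ h : ℝ, h ≥ 3 / Real.sqrt t →
      ∃ v : ℤ × ℤ, t ≤ Real.sqrt ((v.1 : ℝ) ^ 2 + (v.2 : ℝ) ^ 2) ∧
        Real.sqrt ((v.1 : ℝ) ^ 2 + (v.2 : ℝ) ^ 2) ≤ t + h := by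
    intro h hh
    obtain ⟨v, hv1, hv2⟩ := annulus_key t ht
    have hsh : 3 ≤ Real.sqrt t * h := by
      rw [ge_iff_le, div_le_iff₀ hs0] at hh
      linarith [hh]
    have hh0 : 0 ≤ h := by nlinarith
    refine ⟨v, ?_, ?_⟩
    · calc t = Real.sqrt (t ^ 2) := (Real.sqrt_sq ht0.le).symm
        _ ≤ _ := Real.sqrt_le_sqrt hv1
    · calc Real.sqrt ((v.1 : ℝ) ^ 2 + (v.2 : ℝ) ^ 2)
          ≤ Real.sqrt ((t + h) ^ 2) := by
            apply Real.sqrt_le_sqrt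
            nlinarith [mul_nonneg hs0.le (sub_nonneg.mpr hsh)]
        _ = t + h := Real.sqrt_sq (by linarith)
  refine ⟨main, ?_⟩
  obtain ⟨v, hv1, hv2⟩ := main (3 / Real.sqrt t) le_rfl
  exact ⟨v, abs_le.mpr ⟨by linarith, by linarith⟩⟩
end
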